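/- If X : [t₀, T) → M_n(ℝ) solves X'(t) + A(t)·X(t) + X(t)·B(t) = F(t), X(t) is invertible for all t, and tr(X(t)⁻¹·F(t)) = tr(A(t)) + tr(B(t)) for all t, then det X(t) = det X₀ is constant on [t₀, T). -/

import Mathlib

/-!
Jacobi's formula gives `(det X)' = tr (adj X · X')`. Substituting `X' = F - A X - X B` and using
`tr (adj X · A X) = tr (X adj X · A) = det X · tr A` (and likewise for `B`) turns the hypothesis on
`tr (X⁻¹ F)` into `(det X)' = 0`, so `det X` is constant on the interval.
-/

open Matrix

namespace Matrix

variable {ι R : Type*} [Fintype ι] [DecidableEq ι] [CommRing R]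

theorem det_updateCol_eq_sum_perm (M N : Matrix ι ι R) (i : ι) :
    (M.updateCol i fun k => N k i).det =
      ∑ σ : Equiv.Perm ι, (Equiv.Perm.sign σ : R) *
        ((∏ j ∈ Finset.univ.erase i, M (σ j) j) * N (σ i) i) := by
  rw [det_apply']
  refine Finset.sum_congr rfl fun σ _ => ?_
  rw [← Finset.mul_prod_erase Finset.univ _ (Finset.mem_univ i), updateCol_self, mul_comm
    (N (σ i) i)]
  congr 2
  refine Finset.prod_congr rfl fun j hj => ?_
  rw [updateCol_ne (Finset.ne_of_mem_erase hj)]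

theorem sum_det_updateCol_eq_trace_adjugate_mul (M N : Matrix ι ι R) :
    ∑ i, (M.updateCol i fun k => N k i).det = (adjugate M * N).trace := by
  refine Finset.sum_congr rfl fun i _ => ?_
  rw [← cramer_apply, cramer_eq_adjugate_mulVec]
  rfl

theorem trace_adjugate_mul_of_add_mul_add_mul_eq {X X' A B F : Matrix ι ι R}
    (h : X' + A * X + X * B = F) :
    (adjugate X * X').trace = (adjugate X * F).trace - X.det * (A.trace + B.trace) := by
  have hA : (adjugate X * (A * X)).trace = X.det * A.trace := by
    rw [trace_mul_comm, mul_assoc, mul_adjugate, mul_smul_comm, mul_one, trace_smul, smul_eq_mul]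
  have hB : (adjugate X * (X * B)).trace = X.det * B.trace := by
    rw [← mul_assoc, adjugate_mul, smul_mul_assoc, one_mul, trace_smul, smul_eq_mul]
  rw [← h, mul_add, mul_add, trace_add, trace_add, hA, hB]
  ring

theorem adjugate_eq_det_smul_inv {M : Matrix ι ι R} (h : IsUnit M.det) :
    adjugate M = M.det • M⁻¹ := by
  rw [inv_def, smul_smul, Ring.mul_inverse_cancel _ h, one_smul]

end Matrix

section Jacobi

variable {𝕜 ι : Type*} [NontriviallyNormedField 𝕜] [Fintype ι] [DecidableEq ι]

theorem hasDerivAt_det {X : 𝕜 → Matrix ι ι 𝕜} {X' : Matrix ι ι 𝕜} {t : 𝕜}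
    (h : ∀ i j, HasDerivAt (fun s => X s i j) (X' i j) t) :
    HasDerivAt (fun s => (X s).det) (adjugate (X t) * X').trace t := by
  have hLeibniz : HasDerivAt (fun s => ∑ σ : Equiv.Perm ι, (Equiv.Perm.sign σ : 𝕜) *
        ∏ j, X s (σ j) j)
      (∑ σ : Equiv.Perm ι, (Equiv.Perm.sign σ : 𝕜) *
        ∑ i, (∏ j ∈ Finset.univ.erase i, X t (σ j) j) • X' (σ i) i) t :=
    HasDerivAt.fun_sum fun σ _ =>
      (HasDerivAt.fun_finsetProd fun j _ => h (σ j) j).const_mul _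
  simp_rw [det_apply']
  convert hLeibniz using 1
  simp_rw [← sum_det_updateCol_eq_trace_adjugate_mul, det_updateCol_eq_sum_perm, Finset.mul_sum,
    smul_eq_mul]
  exact Finset.sum_comm

end Jacobi

theorem stmt_18_general {n : ℕ} (t₀ T : ℝ) (X X' A B F : ℝ → Matrix (Fin n) (Fin n) ℝ)
    (X₀ : Matrix (Fin n) (Fin n) ℝ)
    (hX : ∀ t ∈ Set.Ico t₀ T, ∀ i j, HasDerivAt (fun s => X s i j) (X' t i j) t)
    (hInv : ∀ t ∈ Set.Ico t₀ T, IsUnit (X t))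
    (hODE : ∀ t ∈ Set.Ico t₀ T, X' t + A t * X t + X t * B t = F t)
    (hX0 : X t₀ = X₀)
    (htr : ∀ t ∈ Set.Ico t₀ T, ((X t)⁻¹ * F t).trace = (A t).trace + (B t).trace) :
    ∀ t ∈ Set.Ico t₀ T, (X t).det = X₀.det := by
  have hderiv : ∀ u ∈ Set.Ico t₀ T, HasDerivAt (fun s => (X s).det) 0 u := by
    intro u hu
    have hdet : IsUnit (X u).det := (isUnit_iff_isUnit_det _).mp (hInv u hu)
    have hzero : (adjugate (X u) * X' u).trace = 0 := by
      rw [trace_adjugate_mul_of_add_mul_add_mul_eq (hODE u hu), adjugate_eq_det_smul_inv hdet,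
        smul_mul_assoc, trace_smul, htr u hu, smul_eq_mul, sub_self]
    exact hzero ▸ hasDerivAt_det (hX u hu)
  intro t ht
  have hsub : Set.Icc t₀ t ⊆ Set.Ico t₀ T := Set.Icc_subset_Ico_right ht.2
  rw [← hX0]
  exact constant_of_has_deriv_right_zero
    (fun u hu => (hderiv u (hsub hu)).continuousAt.continuousWithinAt)
    (fun u hu => (hderiv u (hsub (Set.Ico_subset_Icc_self hu))).hasDerivWithinAt) t
    (Set.right_mem_Icc.mpr ht.1)

theorem stmt_18 {n : ℕ} (t₀ T : ℝ) (X X' A B F : ℝ → Matrix (Fin n) (Fin n) ℝ)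
    (X₀ : Matrix (Fin n) (Fin n) ℝ)
    (hA : ContinuousOn A (Set.Ico t₀ T)) (hB : ContinuousOn B (Set.Ico t₀ T))
    (hF : ContinuousOn F (Set.Ico t₀ T))
    (hX : ∀ t ∈ Set.Ico t₀ T, ∀ i j, HasDerivAt (fun s => X s i j) (X' t i j) t)
    (hInv : ∀ t ∈ Set.Ico t₀ T, IsUnit (X t))
    (hODE : ∀ t ∈ Set.Ico t₀ T, X' t + A t * X t + X t * B t = F t)
    (hX0 : X t₀ = X₀)
    (htr : ∀ t ∈ Set.Ico t₀ T, ((X t)⁻¹ * F t).trace = (A t).trace + (B t).trace) :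
    ∀ t ∈ Set.Ico t₀ T, (X t).det = X₀.det :=
  stmt_18_general t₀ T X X' A B F X₀ hX hInv hODE hX0 htr
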